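/- arXiv:2504.17184 — 9 statements merged into one kernel-verified Lean document; each statement's English description precedes it below -/
import Mathlib

section
/- For every prime p ≥ 5 and every integer r ≥ 1, the p-adic valuation of the double factorial (2r+1)!! is at most r-1. -/
/-! Since n‼ divides n!, Legendre's formula gives (p - 1) · ord_p(n‼) ≤ n - s_p(n) < n.
For n = 2r + 1 and p ≥ 5 this reads 4 · ord_p((2r+1)‼) < 2r + 1, i.e. ord_p((2r+1)‼) ≤ r / 2. -/

open Nat

theorem Nat.doubleFactorial_dvd_factorial : ∀ n : ℕ, n‼ ∣ n !
  | 0 => dvd_rfl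
  | n + 1 => Dvd.intro _ (factorial_eq_mul_doubleFactorial n).symm

theorem padicValNat_doubleFactorial_le_factorial (p : ℕ) [Fact p.Prime] (n : ℕ) :
    padicValNat p n‼ ≤ padicValNat p n ! :=
  (padicValNat_dvd_iff_le (factorial_ne_zero n)).mp
    (pow_padicValNat_dvd.trans (doubleFactorial_dvd_factorial n))

theorem sub_one_mul_padicValNat_doubleFactorial_lt_of_ne_zero (p : ℕ) [Fact p.Prime] {n : ℕ}
    (hn : n ≠ 0) : (p - 1) * padicValNat p n‼ < n :=
  (Nat.mul_le_mul_left _ (padicValNat_doubleFactorial_le_factorial p n)).trans_lt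
    (sub_one_mul_padicValNat_factorial_lt_of_ne_zero p hn)

theorem stmt_2_general (p r : ℕ) (hp : p.Prime) (hp5 : 5 ≤ p) :
    padicValNat p (Nat.doubleFactorial (2 * r + 1)) ≤ r - 1 := by
  have : Fact p.Prime := ⟨hp⟩
  have hlt := sub_one_mul_padicValNat_doubleFactorial_lt_of_ne_zero p (n := 2 * r + 1) (by omega)
  have h4 : 4 * padicValNat p (2 * r + 1)‼ ≤ (p - 1) * padicValNat p (2 * r + 1)‼ :=
    Nat.mul_le_mul_right _ (by omega)
  omega

theorem stmt_2 (p r : ℕ) (hp : p.Prime) (hp5 : 5 ≤ p) (hr : 1 ≤ r) :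
    padicValNat p (Nat.doubleFactorial (2 * r + 1)) ≤ r - 1 :=
  stmt_2_general p r hp hp5
end

section
/- Let n ≥ 1 and d be positive integers, set h = d + 2n + 2, and for 1 ≤ r ≤ n define u_r = C(n,r) · h(h+2)(h+4)···(h+2r-2) / (1·3·5···(2r+1)). If β/γ (with β, γ coprime integers, γ > 0) is a rational root of the monic polynomial S(X) = X^n + Σ_{r=1}^{n} (-1)^r u_r X^{n-r}, then γ ∈ {1, 3}; i.e., the root can be written k/3 for some integer k. -/
/-!
Let a prime `p` divide the denominator of the root `q`, with `v = v_p(q.den) ≥ 1`. The numerator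
of `u_r` is an integer, so `|u_r q^{n-r}|_p ≤ p^{v_p((2r+1)‼) + (n-r)v}`, while `|q^n|_p = p^{nv}`.
Since `(2r+1)‼` is odd and, by Legendre's formula, `(p-1) v_p((2r+1)‼) ≤ 2r+1`, we get
`v_p((2r+1)‼) < rv` unless `p = 3` and `v = 1`. Outside that case `q^n` strictly dominates every
other term `p`-adically, so the equation cannot hold. A denominator other than `1` and `3` has a
prime factor `p ≠ 3` or is divisible by `9`.
-/

open Finset
open scoped Nat

theorem odd_doubleFactorial_two_mul_add_one (k : ℕ) : Odd (2 * k + 1)‼ := by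
  induction k with
  | zero => simp
  | succ k ih =>
    rw [show 2 * (k + 1) + 1 = 2 * k + 1 + 2 by ring, Nat.doubleFactorial_add_two]
    exact (Nat.odd_add.mpr (by simp)).mul ih

theorem sub_one_mul_padicValNat_doubleFactorial_le (p m : ℕ) [Fact p.Prime] :
    (p - 1) * padicValNat p m‼ ≤ m := by
  cases m with
  | zero => simp
  | succ m =>
    have hdvd : (m + 1)‼ ∣ (m + 1)! := ⟨m‼, Nat.factorial_eq_mul_doubleFactorial m⟩
    calc (p - 1) * padicValNat p (m + 1)‼
        ≤ (p - 1) * padicValNat p (m + 1)! :=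
          Nat.mul_le_mul_left _ (padicValNat_dvd_iff_le (Nat.factorial_ne_zero _) |>.mp
            (pow_padicValNat_dvd.trans hdvd))
      _ ≤ m + 1 := by rw [sub_one_mul_padicValNat_factorial]; exact Nat.sub_le _ _

theorem padicValNat_doubleFactorial_lt_mul {p r v : ℕ} (hp : p.Prime) (hr : 1 ≤ r) (hv : 1 ≤ v)
    (h3 : p = 3 → 2 ≤ v) : padicValNat p (2 * r + 1)‼ < r * v := by
  have : Fact p.Prime := ⟨hp⟩
  have hlegendre := sub_one_mul_padicValNat_doubleFactorial_le p (2 * r + 1)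
  have hrv : r * 1 ≤ r * v := Nat.mul_le_mul_left r hv
  rcases hp.eq_two_or_odd' with rfl | hodd
  · rw [padicValNat.eq_zero_of_not_dvd
      (odd_doubleFactorial_two_mul_add_one r).not_two_dvd_nat]
    omega
  by_cases hp3 : p = 3
  · subst hp3
    have hrv2 : r * 2 ≤ r * v := Nat.mul_le_mul_left r (h3 rfl)
    omega
  · have hp5 : 5 ≤ p := by
      have := hp.two_le
      obtain ⟨k, rfl⟩ := hodd
      omega
    have : 4 * padicValNat p (2 * r + 1)‼ ≤ 2 * r + 1 :=
      (Nat.mul_le_mul_right _ (by omega)).trans hlegendre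
    omega

theorem exists_prime_dvd_of_ne_one_of_ne_three {m : ℕ} (hm1 : m ≠ 1) (hm3 : m ≠ 3) :
    ∃ p, p.Prime ∧ p ∣ m ∧ (p = 3 → 9 ∣ m) := by
  by_cases h : ∃ p, p.Prime ∧ p ∣ m ∧ p ≠ 3
  · obtain ⟨p, hp, hpm, hp3⟩ := h
    exact ⟨p, hp, hpm, fun h => absurd h hp3⟩
  push Not at h
  have h3m : 3 ∣ m := h _ (Nat.minFac_prime hm1) (Nat.minFac_dvd m) ▸ Nat.minFac_dvd m
  obtain ⟨k, rfl⟩ := h3m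
  have hk1 : k ≠ 1 := by rintro rfl; exact hm3 rfl
  have hk3 : 3 ∣ k :=
    h _ (Nat.minFac_prime hk1) ((Nat.minFac_dvd k).mul_left 3) ▸ Nat.minFac_dvd k
  exact ⟨3, Nat.prime_three, dvd_mul_right 3 k, fun _ => Nat.mul_dvd_mul_left 3 hk3⟩

theorem padicNorm_natCast_eq_zpow {p m : ℕ} (hm : m ≠ 0) :
    padicNorm p m = (p : ℚ) ^ (-(padicValNat p m : ℤ)) := by
  rw [padicNorm.eq_zpow_of_nonzero (by exact_mod_cast hm), padicValRat.of_nat]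

section padicNorm

variable {p : ℕ} [Fact p.Prime]

theorem padicNorm_eq_inv_padicNorm_den {q : ℚ} (hpq : p ∣ q.den) :
    padicNorm p q = (padicNorm p q.den)⁻¹ := by
  have hnum : ¬ (p : ℤ) ∣ q.num := fun hdvd =>
    (Fact.out : p.Prime).one_lt.ne' <| Nat.eq_one_of_dvd_one <| q.reduced ▸
      Nat.dvd_gcd (Int.natCast_dvd.mp hdvd) hpq
  conv_lhs => rw [← q.num_div_den]
  rw [padicNorm.div, (padicNorm.int_eq_one_iff _).mpr hnum, one_div]

theorem padicNorm_intCast_div_natCast_lt_pow {a : ℤ} {b r : ℕ} {q : ℚ} (hb : b ≠ 0)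
    (hpq : p ∣ q.den) (hval : padicValNat p b < r * padicValNat p q.den) :
    padicNorm p (a / b) < padicNorm p q ^ r := by
  have hp : (1 : ℚ) < p := by exact_mod_cast (Fact.out : p.Prime).one_lt
  calc padicNorm p (a / b) ≤ (padicNorm p b)⁻¹ := by
        rw [padicNorm.div, div_eq_mul_inv]
        exact mul_le_of_le_one_left (inv_nonneg.mpr (padicNorm.nonneg _)) (padicNorm.of_int a)
    _ = (p : ℚ) ^ padicValNat p b := by
        rw [padicNorm_natCast_eq_zpow hb, zpow_neg, inv_inv, zpow_natCast]
    _ < (p : ℚ) ^ (r * padicValNat p q.den) := pow_lt_pow_right₀ hp hval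
    _ = padicNorm p q ^ r := by
        rw [padicNorm_eq_inv_padicNorm_den hpq, padicNorm_natCast_eq_zpow q.den_nz, zpow_neg,
          inv_inv, zpow_natCast, ← pow_mul, mul_comm]

theorem pow_add_sum_mul_pow_ne_zero_of_padicNorm_lt {n : ℕ} {q : ℚ} (c : ℕ → ℚ)
    (hc : ∀ r ∈ Icc 1 n, padicNorm p (c r) < padicNorm p q ^ r) :
    q ^ n + ∑ r ∈ Icc 1 n, c r * q ^ (n - r) ≠ 0 := by
  rcases Nat.eq_zero_or_pos n with rfl | hn
  · simp
  have h1 : 1 ∈ Icc 1 n := mem_Icc.mpr ⟨le_rfl, hn⟩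
  have hq : 0 < padicNorm p q := (padicNorm.nonneg _).trans_lt (by simpa using hc 1 h1)
  intro hroot
  have hsum : padicNorm p (∑ r ∈ Icc 1 n, c r * q ^ (n - r)) < padicNorm p (q ^ n) := by
    refine padicNorm.sum_lt ⟨1, h1⟩ fun r hr => ?_
    rw [padicNorm.mul, IsAbsoluteValue.abv_pow (padicNorm p),
      IsAbsoluteValue.abv_pow (padicNorm p), ← Nat.add_sub_of_le (mem_Icc.mp hr).2, pow_add,
      Nat.add_sub_cancel_left]
    exact mul_lt_mul_of_pos_right (hc r hr) (pow_pos hq _)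
  rw [eq_neg_of_add_eq_zero_right hroot, padicNorm.neg] at hsum
  exact hsum.false

end padicNorm

theorem stmt_5_general (n d : ℕ) (q : ℚ)
    (hroot : q ^ n + ∑ r ∈ Finset.Icc 1 n, (-1 : ℚ) ^ r *
      ((n.choose r : ℚ) * (∏ i ∈ Finset.range r, ((d : ℚ) + 2 * n + 2 + 2 * i)) /
        (Nat.doubleFactorial (2 * r + 1) : ℚ)) * q ^ (n - r) = 0) :
    q.den = 1 ∨ q.den = 3 := by
  by_contra! hden
  obtain ⟨p, hp, hpq, hp3⟩ := exists_prime_dvd_of_ne_one_of_ne_three hden.1 hden.2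
  have : Fact p.Prime := ⟨hp⟩
  refine pow_add_sum_mul_pow_ne_zero_of_padicNorm_lt (p := p) _ (fun r hr => ?_) hroot
  have hv : 1 ≤ padicValNat p q.den := one_le_padicValNat_of_dvd q.den_nz hpq
  have hv3 : p = 3 → 2 ≤ padicValNat p q.den := fun h => by
    subst h; exact (padicValNat_dvd_iff_le q.den_nz).mp (hp3 rfl)
  convert padicNorm_intCast_div_natCast_lt_pow
    (a := (-1) ^ r * (n.choose r * ∏ i ∈ range r, (d + 2 * n + 2 + 2 * i) : ℕ))
    (Nat.doubleFactorial_pos _).ne' hpq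
    (padicValNat_doubleFactorial_lt_mul hp (mem_Icc.mp hr).1 hv hv3) using 2
  push_cast
  ring

/-- If `β/γ` (in lowest terms) is a rational root of
`X^n + ∑_{r=1}^n (-1)^r u_r X^{n-r}` with
`u_r = C(n,r) · h(h+2)⋯(h+2r-2) / (2r+1)‼` and `h = d + 2n + 2`,
then the denominator is `1` or `3`, i.e. the root is `k/3` for some integer `k`. -/
theorem stmt_5 (n d : ℕ) (hn : 1 ≤ n) (hd : 1 ≤ d) (q : ℚ)
    (hroot : q ^ n + ∑ r ∈ Finset.Icc 1 n, (-1 : ℚ) ^ r *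
      ((n.choose r : ℚ) * (∏ i ∈ Finset.range r, ((d : ℚ) + 2 * n + 2 + 2 * i)) /
        (Nat.doubleFactorial (2 * r + 1) : ℚ)) * q ^ (n - r) = 0) :
    q.den = 1 ∨ q.den = 3 :=
  stmt_5_general n d q hroot
end

section
/- Let d = 2k with k ≥ 2, and for n ≥ 1 define u_n = (d+2n)(d+2n+2)···(d+4n-2) / (1·3·5···(2n-1)). Then u_n = 2^{2n + ⌊(k-1)/2⌋} · [(2n+1)(2n+3)···(2n+2⌊k/2⌋-1)] / [(n+⌊(k-1)/2⌋+1)(n+⌊(k-1)/2⌋+2)···(n+⌊(k-1)/2⌋+⌊k/2⌋)]. -/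
open Finset Nat

/-
Writing `a = ⌊k/2⌋` and `b = ⌊(k-1)/2⌋`, so that `a + b = k - 1`, every product in the identity is
a quotient of factorials or of odd double factorials:
`∏ (2k+2n+2i) = 2ⁿ (2n+k-1)! / (k+n-1)!`, `∏ (2n+2i+1) = (2n+2a-1)‼ / (2n-1)‼` and
`∏ (n+b+1+i) = (n+k-1)! / (n+b)!`. After cross-multiplying, the identity reduces to
`(2n+k-1)! = 2^(n+b) (n+b)! (2n+2a-1)‼`, which is `j! = (2⌊j/2⌋)‼ (2⌈j/2⌉-1)‼` for `j = 2n+k-1`.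
-/

theorem Nat.factorial_eq_doubleFactorial_mul_doubleFactorial_sub_one (j : ℕ) :
    j ! = j‼ * (j - 1)‼ := by
  cases j with
  | zero => rfl
  | succ j => exact factorial_eq_mul_doubleFactorial j

theorem Nat.factorial_eq_two_pow_mul_factorial_mul_doubleFactorial (j : ℕ) :
    j ! = 2 ^ (j / 2) * (j / 2)! * (2 * ((j + 1) / 2) - 1)‼ := by
  rw [factorial_eq_doubleFactorial_mul_doubleFactorial_sub_one]
  obtain ⟨m, rfl | rfl⟩ := j.even_or_odd'
  · rw [doubleFactorial_two_mul, show 2 * m / 2 = m by omega, show (2 * m + 1) / 2 = m by omega]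
  · rw [show 2 * m + 1 - 1 = 2 * m by omega, doubleFactorial_two_mul, mul_comm,
      show (2 * m + 1) / 2 = m by omega, show 2 * ((2 * m + 1 + 1) / 2) - 1 = 2 * m + 1 by omega]

theorem Nat.doubleFactorial_mul_prod_range_odd (n a : ℕ) :
    (2 * n - 1)‼ * ∏ i ∈ range a, (2 * n + 2 * i + 1) = (2 * (n + a) - 1)‼ := by
  induction a with
  | zero => simp
  | succ a ih =>
    rw [prod_range_succ, ← mul_assoc, ih, show 2 * (n + (a + 1)) - 1 = 2 * (n + a) + 1 by omega,
      doubleFactorial_add_one]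
    ring

theorem Nat.factorial_mul_prod_range_succ_add (c a : ℕ) :
    c ! * ∏ i ∈ range a, (c + 1 + i) = (c + a)! := by
  rw [← ascFactorial_eq_prod_range, factorial_mul_ascFactorial]

theorem Nat.prod_range_two_mul_mul_factorial {k : ℕ} (hk : 1 ≤ k) (n : ℕ) :
    (∏ i ∈ range n, (2 * k + 2 * n + 2 * i)) * (k + n - 1)! = 2 ^ n * (2 * n + k - 1)! := by
  have hprod : ∏ i ∈ range n, (2 * k + 2 * n + 2 * i) = 2 ^ n * ∏ i ∈ range n, (k + n - 1 + 1 + i) :=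
    calc _ = ∏ i ∈ range n, 2 * (k + n - 1 + 1 + i) := prod_congr rfl fun i _ => by omega
      _ = _ := by rw [← pow_card_mul_prod, card_range]
  rw [hprod, mul_assoc, mul_comm (∏ i ∈ range n, _), factorial_mul_prod_range_succ_add,
    show k + n - 1 + n = 2 * n + k - 1 by omega]

theorem Nat.prod_even_mul_prod_ascending_eq {k : ℕ} (hk : 1 ≤ k) (n : ℕ) :
    (∏ i ∈ range n, (2 * k + 2 * n + 2 * i)) * ∏ i ∈ range (k / 2), (n + (k - 1) / 2 + 1 + i) =
      2 ^ (2 * n + (k - 1) / 2) * (∏ i ∈ range (k / 2), (2 * n + 2 * i + 1)) * (2 * n - 1)‼ := by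
  set a := k / 2
  set b := (k - 1) / 2
  have hfactorial : (2 * n + k - 1)! = 2 ^ (n + b) * (n + b)! * (2 * (n + a) - 1)‼ := by
    rw [factorial_eq_two_pow_mul_factorial_mul_doubleFactorial,
      show (2 * n + k - 1) / 2 = n + b by omega, show (2 * n + k - 1 + 1) / 2 = n + a by omega]
  have hascending := factorial_mul_prod_range_succ_add (n + b) a
  rw [show n + b + a = k + n - 1 by omega] at hascending
  have hpos : 0 < (n + b)! * (k + n - 1)! := by positivity
  apply Nat.eq_of_mul_eq_mul_right hpos
  calc _ = ((∏ i ∈ range n, (2 * k + 2 * n + 2 * i)) * (k + n - 1)!) *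
          ((n + b)! * ∏ i ∈ range a, (n + b + 1 + i)) := by ring
    _ = 2 ^ (2 * n + b) * ((2 * n - 1)‼ * ∏ i ∈ range a, (2 * n + 2 * i + 1)) *
          ((n + b)! * (k + n - 1)!) := by
      rw [prod_range_two_mul_mul_factorial hk, hascending, hfactorial,
        doubleFactorial_mul_prod_range_odd]
      ring
    _ = _ := by ring

theorem stmt_6_general (k n : ℕ) (hk : 2 ≤ k) :
    (∏ i ∈ Finset.range n, ((2 * k : ℚ) + 2 * n + 2 * i)) /
      (Nat.doubleFactorial (2 * n - 1) : ℚ) =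
    2 ^ (2 * n + (k - 1) / 2) *
      (∏ i ∈ Finset.range (k / 2), ((2 * n : ℚ) + 2 * i + 1)) /
      (∏ i ∈ Finset.range (k / 2), ((n : ℚ) + (((k - 1) / 2 : ℕ) : ℚ) + 1 + i)) := by
  rw [div_eq_div_iff (by positivity) (by positivity)]
  exact_mod_cast prod_even_mul_prod_ascending_eq (by omega) n

/-- For `d = 2k`, `k ≥ 2`, the constant term
`u_n = (d+2n)(d+2n+2)⋯(d+4n-2)/(1·3⋯(2n-1))` equals
`2^{2n+⌊(k-1)/2⌋} · (2n+1)(2n+3)⋯(2n+2⌊k/2⌋-1) /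
  ((n+⌊(k-1)/2⌋+1)⋯(n+⌊(k-1)/2⌋+⌊k/2⌋))`. -/
theorem stmt_6 (k n : ℕ) (hk : 2 ≤ k) (hn : 1 ≤ n) :
    (∏ i ∈ Finset.range n, ((2 * k : ℚ) + 2 * n + 2 * i)) /
      (Nat.doubleFactorial (2 * n - 1) : ℚ) =
    2 ^ (2 * n + (k - 1) / 2) *
      (∏ i ∈ Finset.range (k / 2), ((2 * n : ℚ) + 2 * i + 1)) /
      (∏ i ∈ Finset.range (k / 2), ((n : ℚ) + (((k - 1) / 2 : ℕ) : ℚ) + 1 + i)) :=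
  stmt_6_general k n hk
end

section
/- Suppose n ≥ 2 and the monic integer polynomial S(X) = X^n + Σ_{r=1}^n (-1)^r u_r X^{n-r} with constant term (-1)^n u_n = (-1)^n 2^{2n} has n distinct positive integer roots. Then n ≤ 5. Moreover, no such polynomial with all u_r = C(n,r)·(2n+4)(2n+6)···(2n+2r+2)/(1·3···(2r-1)) has n distinct integer roots for any n ≥ 2. -/
/-!
If the roots of a monic integer polynomial of degree `n` are distinct positive integers, their
product is `±` the constant term. When that is `±2^(2n)`, the roots are distinct powers of `2`,
so their exponents are distinct and sum to `2n`; hence `n(n-1)/2 ≤ 2n`, i.e. `n ≤ 5`.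

For the coefficients `u_r` all terms of `(-1)^n S(-s)` are nonnegative and `u_n > 0`, so every
root is positive and the roots multiply to `u_n = 4^n (2n+1)/(n+1)`. Since `n + 1` is coprime to
`2n + 1`, it divides `4^n`; and `n! ≤ u_n < 2 · 4^n` forces `n ≤ 9`. This leaves `n = 3` and
`n = 7`, where the polynomial has no integer root, not even modulo `11`.
-/

open Polynomial Finset
open scoped Nat

theorem Polynomial.Monic.coeff_zero_eq_prod_of_injective {R : Type*} [CommRing R] [IsDomain R]
    {p : R[X]} (hm : p.Monic) {n : ℕ} (hd : p.natDegree = n) {x : Fin n → R}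
    (hx : Function.Injective x) (hr : ∀ i, p.IsRoot (x i)) :
    p.coeff 0 = (-1) ^ n * ∏ i, x i := by
  have hroots : univ.val.map x = p.roots := by
    refine Multiset.eq_of_le_of_card_le ?_ (by simpa [hd] using card_roots' p)
    rw [Multiset.le_iff_subset (univ.nodup.map hx)]
    intro a ha
    obtain ⟨i, -, rfl⟩ := Multiset.mem_map.1 ha
    exact (mem_roots hm.ne_zero).2 (hr i)
  have hsplits : p.Splits := splits_iff_card_roots.2 (by simp [← hroots, hd])
  rw [hsplits.coeff_zero_eq_prod_roots_of_monic hm, ← hroots, hd]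
  rfl

@[to_additive]
theorem Finset.prod_range_card_le_prod {M : Type*} [CommMonoid M] [PartialOrder M]
    [IsOrderedMonoid M] {f : ℕ → M} (hf : Monotone f) (s : Finset ℕ) :
    ∏ i ∈ range #s, f i ≤ ∏ i ∈ s, f i := by
  induction s using Finset.induction_on_max with
  | empty => simp
  | insert a s hlt ih =>
    have has : a ∉ s := fun h => lt_irrefl a (hlt a h)
    have hcard : #s ≤ a := by
      simpa using card_le_card fun d hd => mem_range.2 (hlt d hd)
    rw [card_insert_of_notMem has, prod_range_succ, prod_insert has, mul_comm]
    exact mul_le_mul' (hf hcard) ih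

theorem Nat.factorial_le_prod_of_injective {n : ℕ} {y : Fin n → ℕ} (hy : Function.Injective y)
    (hpos : ∀ i, 0 < y i) : n ! ≤ ∏ i, y i := by
  have hinj : Function.Injective fun i => y i - 1 := fun i j h => hy (by grind)
  have key := prod_range_card_le_prod (f := (· + 1)) (fun _ _ h => Nat.add_le_add_right h 1)
    (univ.image fun i => y i - 1)
  rwa [Finset.card_image_of_injective _ hinj, Finset.card_fin, prod_range_add_one_eq_factorial,
    prod_image fun i _ j _ h => hinj h, prod_congr rfl fun i _ => Nat.sub_add_cancel (hpos i)]
    at key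

theorem Nat.mul_pred_le_two_mul_sum_of_injective {n : ℕ} {a : Fin n → ℕ}
    (ha : Function.Injective a) : n * (n - 1) ≤ 2 * ∑ i, a i := by
  have key := sum_range_card_le_sum monotone_id (univ.image a)
  rw [Finset.card_image_of_injective _ ha, Finset.card_fin, sum_image fun i _ j _ h => ha h] at key
  have := sum_range_id_mul_two n
  simp only [id] at key
  omega

theorem Nat.mul_pred_le_of_prod_eq_prime_pow {p m n : ℕ} (hp : p.Prime) {y : Fin n → ℕ}
    (hy : Function.Injective y) (hprod : ∏ i, y i = p ^ m) : n * (n - 1) ≤ 2 * m := by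
  have hdvd : ∀ i, y i ∣ p ^ m := fun i => hprod ▸ dvd_prod_of_mem y (mem_univ i)
  choose a _ ha using fun i => (Nat.dvd_prime_pow hp).1 (hdvd i)
  have hinj : Function.Injective a := fun i j h => hy (by rw [ha, ha, h])
  have hsum : ∑ i, a i = m := by
    apply Nat.pow_right_injective hp.two_le
    simp only [← hprod, ha, prod_pow_eq_pow_sum]
  exact hsum ▸ mul_pred_le_two_mul_sum_of_injective hinj

theorem Polynomial.Monic.mul_pred_le_of_coeff_zero_eq_prime_pow {S : ℤ[X]} (hm : S.Monic)
    {n p m : ℕ} (hp : p.Prime) (hd : S.natDegree = n) (h0 : S.coeff 0 = (-1) ^ n * p ^ m)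
    {x : Fin n → ℤ} (hx : Function.Injective x) (hroot : ∀ i, 0 < x i ∧ S.eval (x i) = 0) :
    n * (n - 1) ≤ 2 * m := by
  lift x to Fin n → ℕ using fun i => (hroot i).1.le
  have hprod := hm.coeff_zero_eq_prod_of_injective hd hx fun i => (hroot i).2
  rw [h0] at hprod
  refine Nat.mul_pred_le_of_prod_eq_prime_pow hp (hx.of_comp (f := Nat.cast)) ?_
  exact_mod_cast (mul_left_cancel₀ (pow_ne_zero n (by norm_num)) hprod).symm

theorem Polynomial.degree_sum_Icc_C_mul_X_pow_sub_lt {R : Type*} [Semiring R] (n : ℕ)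
    (c : ℕ → R) : (∑ r ∈ Icc 1 n, C (c r) * X ^ (n - r)).degree < (n : WithBot ℕ) := by
  refine (degree_sum_le _ _).trans_lt ((Finset.sup_lt_iff (WithBot.bot_lt_coe n)).2 fun r hr => ?_)
  exact (degree_C_mul_X_pow_le _ _).trans_lt (Nat.cast_lt.2 (by simp only [mem_Icc] at hr; omega))

noncomputable def alternatingPoly {K : Type*} [CommRing K] (n : ℕ) (u : ℕ → K) : K[X] :=
  X ^ n + ∑ r ∈ Icc 1 n, C ((-1) ^ r * u r) * X ^ (n - r)

section alternatingPoly

variable {K : Type*} [CommRing K] {n : ℕ} {u : ℕ → K}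

theorem eval_alternatingPoly (t : K) :
    (alternatingPoly n u).eval t = t ^ n + ∑ r ∈ Icc 1 n, (-1) ^ r * u r * t ^ (n - r) := by
  simp [alternatingPoly, eval_finsetSum]

theorem monic_alternatingPoly [Nontrivial K] : (alternatingPoly n u).Monic :=
  monic_X_pow_add (degree_sum_Icc_C_mul_X_pow_sub_lt n _)

theorem natDegree_alternatingPoly [Nontrivial K] : (alternatingPoly n u).natDegree = n := by
  rw [alternatingPoly, natDegree_add_eq_left_of_degree_lt, natDegree_X_pow]
  rw [degree_X_pow]
  exact degree_sum_Icc_C_mul_X_pow_sub_lt n _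

theorem coeff_zero_alternatingPoly (hn : n ≠ 0) :
    (alternatingPoly n u).coeff 0 = (-1) ^ n * u n := by
  rw [coeff_zero_eq_eval_zero, eval_alternatingPoly, zero_pow hn, zero_add,
    sum_eq_single_of_mem n (mem_Icc.2 ⟨by omega, le_rfl⟩) fun r hr hrn => by
      rw [zero_pow (by simp only [mem_Icc] at hr; omega), mul_zero]]
  simp

theorem neg_one_pow_mul_eval_alternatingPoly_neg (s : K) :
    (-1) ^ n * (alternatingPoly n u).eval (-s) = s ^ n + ∑ r ∈ Icc 1 n, u r * s ^ (n - r) := by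
  rw [eval_alternatingPoly, mul_add, mul_sum]
  congr 1
  · rw [neg_pow s, ← mul_assoc, ← mul_pow]
    norm_num
  refine sum_congr rfl fun r hr => ?_
  have hsign : (-1 : K) ^ n * (-1) ^ r * (-1) ^ (n - r) = 1 := by
    rw [← pow_add, ← pow_add, show n + r + (n - r) = 2 * n by simp only [mem_Icc] at hr; omega,
      pow_mul]
    norm_num
  rw [neg_pow s]
  linear_combination (u r * s ^ (n - r)) * hsign

end alternatingPoly

theorem pos_of_isRoot_alternatingPoly {K : Type*} [Field K] [LinearOrder K]
    [IsStrictOrderedRing K] {n : ℕ} {u : ℕ → K} (hu : ∀ r, 0 ≤ u r) (hun : 0 < u n) {t : K}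
    (ht : (alternatingPoly n u).IsRoot t) : 0 < t := by
  by_contra! hle
  have hs : 0 ≤ -t := neg_nonneg.2 hle
  have hpos : 0 < (-t) ^ n + ∑ r ∈ Icc 1 n, u r * (-t) ^ (n - r) := by
    rcases Nat.eq_zero_or_pos n with rfl | hn
    · simp
    · refine add_pos_of_nonneg_of_pos (pow_nonneg hs n) ?_
      refine lt_of_lt_of_le ?_ (single_le_sum (fun r _ => mul_nonneg (hu r) (pow_nonneg hs _))
        (mem_Icc.2 ⟨hn, le_rfl⟩))
      simpa using hun
  rw [← neg_one_pow_mul_eval_alternatingPoly_neg, neg_neg, ht.eq_zero, mul_zero] at hpos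
  exact lt_irrefl 0 hpos

/-- The coefficient `u_r` of the paper for `d' = 2`. -/
noncomputable def sphereCoeff (n r : ℕ) : ℚ :=
  (n.choose r : ℚ) * (∏ j ∈ range r, ((2 * n : ℚ) + 4 + 2 * j)) /
    (Nat.doubleFactorial (2 * r - 1) : ℚ)

theorem sphereCoeff_nonneg (n r : ℕ) : 0 ≤ sphereCoeff n r := by
  unfold sphereCoeff
  have := prod_nonneg fun j (_ : j ∈ range r) => (by positivity : (0 : ℚ) ≤ 2 * n + 4 + 2 * j)
  positivity

theorem prod_range_two_mul_add_mul_factorial (n r : ℕ) :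
    (∏ j ∈ range r, (2 * n + 4 + 2 * j)) * (n + 1)! = 2 ^ r * (n + 1 + r)! := by
  have hprod : ∏ j ∈ range r, (2 * n + 4 + 2 * j) = 2 ^ r * ∏ j ∈ range r, (n + 1 + 1 + j) := by
    rw [pow_eq_prod_const, ← prod_mul_distrib]
    exact prod_congr rfl fun j _ => by ring
  rw [hprod, ← Nat.factorial_mul_ascFactorial (n + 1) r, Nat.ascFactorial_eq_prod_range]
  ring

theorem Nat.doubleFactorial_two_mul_sub_one_mul (n : ℕ) :
    (2 * n - 1)‼ * (2 ^ n * n !) = (2 * n)! := by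
  rcases n with _ | n
  · rfl
  rw [← Nat.doubleFactorial_two_mul, show 2 * (n + 1) = 2 * n + 1 + 1 by ring,
    Nat.factorial_eq_mul_doubleFactorial, mul_comm]
  rfl

theorem prod_range_two_mul_add_mul_succ (n : ℕ) :
    (∏ j ∈ range n, (2 * n + 4 + 2 * j)) * (n + 1) = 4 ^ n * (2 * n + 1) * (2 * n - 1)‼ := by
  have h := prod_range_two_mul_add_mul_factorial n n
  rw [show n + 1 + n = 2 * n + 1 by ring, Nat.factorial_succ, Nat.factorial_succ,
    ← Nat.doubleFactorial_two_mul_sub_one_mul] at h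
  apply Nat.eq_of_mul_eq_mul_right (Nat.factorial_pos n)
  rw [show (4 : ℕ) ^ n = 2 ^ n * 2 ^ n by rw [← mul_pow]; norm_num]
  linear_combination h

theorem sphereCoeff_self_mul (n : ℕ) : sphereCoeff n n * (n + 1) = 4 ^ n * (2 * n + 1) := by
  have h := prod_range_two_mul_add_mul_succ n
  have hd : ((2 * n - 1)‼ : ℚ) ≠ 0 := by positivity
  rw [sphereCoeff, Nat.choose_self, Nat.cast_one, one_mul, div_mul_eq_mul_div, div_eq_iff hd]
  exact_mod_cast h

theorem sphereCoeff_self_pos (n : ℕ) : 0 < sphereCoeff n n := by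
  have h : 0 < sphereCoeff n n * (n + 1) := by rw [sphereCoeff_self_mul]; positivity
  exact (mul_pos_iff_of_pos_right (by positivity)).1 h

theorem Nat.two_mul_four_pow_lt_factorial {n : ℕ} (hn : 10 ≤ n) : 2 * 4 ^ n < n ! := by
  induction n, hn using Nat.le_induction with
  | base => decide
  | succ n hn ih =>
    rw [Nat.factorial_succ, pow_succ]
    nlinarith

theorem Nat.eq_three_or_seven_of_mul_succ_eq {n P : ℕ} (hn : 2 ≤ n)
    (hP : P * (n + 1) = 4 ^ n * (2 * n + 1)) (hfac : n ! ≤ P) : n = 3 ∨ n = 7 := by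
  have hcop : Nat.Coprime (n + 1) (2 * n + 1) := by
    rw [show 2 * n + 1 = n + 1 + n by ring, Nat.coprime_self_add_right]
    simp
  have hdvd : n + 1 ∣ 4 ^ n := hcop.dvd_of_dvd_mul_right ⟨P, by rw [← hP, mul_comm]⟩
  have hP_lt : P < 2 * 4 ^ n := by
    refine Nat.lt_of_mul_lt_mul_right (a := n + 1) ?_
    calc P * (n + 1) = 4 ^ n * (2 * n + 1) := hP
      _ < 4 ^ n * (2 * (n + 1)) := Nat.mul_lt_mul_of_pos_left (by omega) (by positivity)
      _ = 2 * 4 ^ n * (n + 1) := by ring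
  have hle : n ≤ 9 := by
    by_contra! h
    have := two_mul_four_pow_lt_factorial (n := n) (by omega)
    omega
  interval_cases n <;> omega

theorem eval_alternatingPoly_sphereCoeff_three_int_ne_zero (t : ℤ) :
    (alternatingPoly 3 (sphereCoeff 3)).eval (t : ℚ) ≠ 0 := by
  have heval : (alternatingPoly 3 (sphereCoeff 3)).eval (t : ℚ) =
      ((t ^ 3 - 30 * t ^ 2 + 120 * t - 112 : ℤ) : ℚ) := by
    simp only [eval_alternatingPoly, sphereCoeff, sum_Icc_succ_top, Nat.one_le_ofNat, Icc_self,
      sum_singleton, prod_range_succ, range_one, prod_singleton, Nat.choose, Nat.doubleFactorial,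
      Nat.reduceSub, Nat.reduceMul, Nat.reduceAdd]
    push_cast
    ring
  rw [heval, Int.cast_ne_zero]
  intro h
  have hmod := congrArg (Int.cast : ℤ → ZMod 11) h
  push_cast at hmod
  generalize (t : ZMod 11) = s at hmod
  revert s
  decide

theorem eval_alternatingPoly_sphereCoeff_seven_int_ne_zero (t : ℤ) :
    (alternatingPoly 7 (sphereCoeff 7)).eval (t : ℚ) ≠ 0 := by
  have heval : (alternatingPoly 7 (sphereCoeff 7)).eval (t : ℚ) =
      ((t ^ 7 - 126 * t ^ 6 + 2520 * t ^ 5 - 18480 * t ^ 4 + 63360 * t ^ 3 - 109824 * t ^ 2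
        + 93184 * t - 30720 : ℤ) : ℚ) := by
    simp only [eval_alternatingPoly, sphereCoeff, sum_Icc_succ_top, Nat.one_le_ofNat, Icc_self,
      sum_singleton, prod_range_succ, range_one, prod_singleton, Nat.choose, Nat.doubleFactorial,
      Nat.reduceSub, Nat.reduceMul, Nat.reduceAdd]
    push_cast
    ring
  rw [heval, Int.cast_ne_zero]
  intro h
  have hmod := congrArg (Int.cast : ℤ → ZMod 11) h
  push_cast at hmod
  generalize (t : ZMod 11) = s at hmod
  revert s
  decide

theorem not_exists_injective_isRoot_alternatingPoly_sphereCoeff {n : ℕ} (hn : 2 ≤ n) :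
    ¬ ∃ x : Fin n → ℤ, Function.Injective x ∧
      ∀ i, (alternatingPoly n (sphereCoeff n)).IsRoot (x i) := by
  rintro ⟨x, hx, hroot⟩
  have hpos : ∀ i, 0 < x i := fun i => by
    exact_mod_cast pos_of_isRoot_alternatingPoly (sphereCoeff_nonneg n) (sphereCoeff_self_pos n)
      (hroot i)
  lift x to Fin n → ℕ using fun i => (hpos i).le
  simp only [Int.cast_natCast, Nat.cast_pos] at hpos hroot
  have hxq : Function.Injective fun i => (x i : ℚ) := fun i j h => hx (by simpa using h)
  have hprod := monic_alternatingPoly.coeff_zero_eq_prod_of_injective natDegree_alternatingPoly hxq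
    hroot
  rw [coeff_zero_alternatingPoly (by omega)] at hprod
  have hprod_eq : ((∏ i, x i : ℕ) : ℚ) = sphereCoeff n n := by
    push_cast
    exact (mul_left_cancel₀ (pow_ne_zero n (by norm_num)) hprod).symm
  have hP : (∏ i, x i) * (n + 1) = 4 ^ n * (2 * n + 1) := by
    exact_mod_cast hprod_eq ▸ sphereCoeff_self_mul n
  have hfac := Nat.factorial_le_prod_of_injective (hx.of_comp (f := Nat.cast)) hpos
  rcases Nat.eq_three_or_seven_of_mul_succ_eq hn hP hfac with rfl | rfl
  · exact eval_alternatingPoly_sphereCoeff_three_int_ne_zero _ (hroot 0)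
  · exact eval_alternatingPoly_sphereCoeff_seven_int_ne_zero _ (hroot 0)

/-- (1) A monic integer polynomial of degree `n ≥ 2` with constant term
`(-1)^n 2^{2n}` having `n` distinct positive integer roots forces `n ≤ 5`.
(2) The polynomial `X^n + ∑ (-1)^r u_r X^{n-r}` with
`u_r = C(n,r)(2n+4)(2n+6)⋯(2n+2r+2)/(1·3⋯(2r-1))` has no `n` distinct
integer roots. -/
theorem stmt_13 (n : ℕ) (hn : 2 ≤ n) :
    (∀ S : Polynomial ℤ, S.Monic → S.natDegree = n →
      S.coeff 0 = (-1) ^ n * 2 ^ (2 * n) →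
      ∀ x : Fin n → ℤ, Function.Injective x →
        (∀ i, 0 < x i ∧ S.eval (x i) = 0) → n ≤ 5) ∧
    ¬ ∃ x : Fin n → ℤ, Function.Injective x ∧ ∀ i,
      ((x i : ℚ)) ^ n + ∑ r ∈ Finset.Icc 1 n, (-1 : ℚ) ^ r *
        ((n.choose r : ℚ) * (∏ j ∈ Finset.range r, ((2 * n : ℚ) + 4 + 2 * j)) /
          (Nat.doubleFactorial (2 * r - 1) : ℚ)) * ((x i : ℚ)) ^ (n - r) = 0 := by
  refine ⟨fun S hm hd h0 x hx hroot => ?_, fun ⟨x, hx, hroot⟩ => ?_⟩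
  · have h := hm.mul_pred_le_of_coeff_zero_eq_prime_pow Nat.prime_two hd (m := 2 * n)
      (by exact_mod_cast h0) hx hroot
    have := Nat.le_of_mul_le_mul_left (h.trans_eq (by ring) : n * (n - 1) ≤ n * 4) (by omega)
    omega
  · exact not_exists_injective_isRoot_alternatingPoly_sphereCoeff hn
      ⟨x, hx, fun i => (eval_alternatingPoly _).trans (hroot i)⟩
end

section
/- For n ≥ 1 and 1 ≤ r ≤ n, the identity C(n,r) · (2n+4)(2n+6)···(2n+2r+2) / (1·3·5···(2r+1)) = (2^{2r}/(n+1)) · C(n+r+1, 2r+1) holds; in particular for r = n this quantity equals 2^{2n}/(n+1), and 2^{2n}/(n+1) ∈ ℤ if and only if n+1 is a power of 2. -/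
lemma prod_aux (n : ℕ) : ∀ r : ℕ, ∏ j ∈ Finset.range r, ((2 * n : ℚ) + 4 + 2 * j) =
    2 ^ r * ((n + 1 + r).factorial : ℚ) / ((n + 1).factorial : ℚ) := by
  intro r
  induction r with
  | zero => simp [div_self (Nat.cast_ne_zero.2 (Nat.factorial_ne_zero (n+1)) : ((n+1).factorial : ℚ) ≠ 0)]
  | succ r ih =>
    rw [Finset.prod_range_succ, ih]
    have hf : (((n + 1 + (r + 1)).factorial : ℚ)) = ((n : ℚ) + r + 2) * ((n + 1 + r).factorial : ℚ) := by
      rw [show n + 1 + (r + 1) = (n + 1 + r) + 1 from rfl, Nat.factorial_succ]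
      push_cast; ring
    rw [hf]
    have h2 : (((n + 1).factorial : ℚ)) ≠ 0 := Nat.cast_ne_zero.2 (Nat.factorial_ne_zero _)
    field_simp
    ring

lemma dfac_aux (r : ℕ) : ((2 * r + 1).doubleFactorial : ℚ) =
    ((2 * r + 1).factorial : ℚ) / (2 ^ r * (r.factorial : ℚ)) := by
  have h := Nat.factorial_eq_mul_doubleFactorial (2 * r)
  rw [Nat.doubleFactorial_two_mul] at h
  rw [eq_div_iff (by positivity)]
  exact_mod_cast h.symm

/-- For `1 ≤ r ≤ n`,
`C(n,r)(2n+4)(2n+6)⋯(2n+2r+2)/(1·3⋯(2r+1)) = (2^{2r}/(n+1)) C(n+r+1, 2r+1)`;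
in particular `2^{2n}/(n+1)` is an integer iff `n+1` is a power of `2`. -/
theorem stmt_14 (n : ℕ) (hn : 1 ≤ n) :
    (∀ r : ℕ, 1 ≤ r → r ≤ n →
      (n.choose r : ℚ) * (∏ j ∈ Finset.range r, ((2 * n : ℚ) + 4 + 2 * j)) /
        (Nat.doubleFactorial (2 * r + 1) : ℚ) =
      (2 : ℚ) ^ (2 * r) / ((n : ℚ) + 1) * ((n + r + 1).choose (2 * r + 1) : ℚ)) ∧
    ((∃ m : ℤ, (2 : ℚ) ^ (2 * n) / ((n : ℚ) + 1) = (m : ℚ)) ↔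
      ∃ ℓ : ℕ, n + 1 = 2 ^ ℓ) := by
  constructor
  · intro r hr1 hr2
    rw [prod_aux, dfac_aux]
    have hle : 2 * r + 1 ≤ n + r + 1 := by omega
    have hsub : (n + r + 1) - (2 * r + 1) = n - r := by omega
    rw [Nat.cast_choose ℚ hr2, Nat.cast_choose ℚ hle, hsub]
    rw [show n + 1 + r = n + r + 1 from by omega]
    have hfac : (((n + 1).factorial : ℚ)) = ((n : ℚ) + 1) * (n.factorial : ℚ) := by
      rw [Nat.factorial_succ]; push_cast; ring
    rw [hfac]
    have nz : ∀ k : ℕ, ((k.factorial : ℚ)) ≠ 0 := fun k => Nat.cast_ne_zero.2 (Nat.factorial_ne_zero _)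
    have nn1 : ((n : ℚ) + 1) ≠ 0 := by positivity
    field_simp
    ring_nf
  · constructor
    · rintro ⟨m, hm⟩
      have hn1 : ((n : ℚ) + 1) ≠ 0 := by positivity
      rw [div_eq_iff hn1] at hm
      have hz : (2 : ℤ) ^ (2 * n) = m * ((n : ℤ) + 1) := by exact_mod_cast hm
      have hdvd : (n + 1 : ℕ) ∣ 2 ^ (2 * n) := by
        have h1 : ((n + 1 : ℕ) : ℤ) ∣ (2 : ℤ) ^ (2 * n) := ⟨m, by push_cast; linarith⟩
        exact_mod_cast Int.ofNat_dvd.mp (by exact_mod_cast h1)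
      obtain ⟨ℓ, _, hℓ⟩ := (Nat.dvd_prime_pow Nat.prime_two).mp hdvd
      exact ⟨ℓ, hℓ⟩
    · rintro ⟨ℓ, hℓ⟩
      have hle : ℓ ≤ 2 * n := by
        have := Nat.lt_pow_self (n := ℓ) (by norm_num : 1 < 2)
        omega
      refine ⟨2 ^ (2 * n - ℓ), ?_⟩
      have hq : ((n : ℚ) + 1) = 2 ^ ℓ := by exact_mod_cast congrArg (Nat.cast (R := ℚ)) hℓ
      rw [hq]
      push_cast
      rw [eq_comm, eq_div_iff (by positivity : ((2:ℚ)^ℓ) ≠ 0), ← pow_add]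
      congr 1
      omega
end

section
/- For n ≥ 1, the quantity u_n = 2^{2n}(2n+1)/(n+1) is an integer if and only if n = 2^ℓ - 1 for some integer ℓ ≥ 1. -/
/-! Since `2n + 1 = 2(n + 1) - 1` is coprime to `n + 1`, the quotient `u_n` is an integer exactly
when `n + 1` divides `2^{2n}`, i.e. when `n + 1` is a power of two (which, being at most `2^n`,
automatically divides `2^{2n}`). -/

theorem Nat.exists_intCast_eq_cast_div_cast_iff_dvd {a b : ℕ} (hb : b ≠ 0) :
    (∃ m : ℤ, (a : ℚ) / b = m) ↔ b ∣ a := by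
  constructor
  · rintro ⟨m, hm⟩
    rw [div_eq_iff (Nat.cast_ne_zero.mpr hb)] at hm
    have hdvd : (b : ℤ) ∣ a := ⟨m, by exact_mod_cast hm.trans (mul_comm _ _)⟩
    exact Int.natCast_dvd_natCast.mp hdvd
  · rintro ⟨c, rfl⟩
    exact ⟨c, by push_cast; field_simp⟩

theorem Nat.coprime_succ_two_mul_add_one (n : ℕ) : Nat.Coprime (n + 1) (2 * n + 1) := by
  have h : 2 * n + 1 = (n + 1) + n := by ring
  rw [h, Nat.coprime_self_add_right, Nat.coprime_self_add_left]
  exact Nat.coprime_one_left n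

theorem Nat.succ_dvd_two_pow_two_mul_iff (n : ℕ) : n + 1 ∣ 2 ^ (2 * n) ↔ ∃ ℓ, n + 1 = 2 ^ ℓ := by
  rw [Nat.dvd_prime_pow Nat.prime_two]
  constructor
  · rintro ⟨ℓ, -, h⟩
    exact ⟨ℓ, h⟩
  · rintro ⟨ℓ, h⟩
    have := Nat.lt_two_pow_self (n := ℓ)
    exact ⟨ℓ, by omega, h⟩

/-- For `n ≥ 1`, `u_n = 2^{2n}(2n+1)/(n+1)` is an integer iff `n = 2^ℓ - 1`
for some `ℓ ≥ 1`. -/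
theorem stmt_15 (n : ℕ) (hn : 1 ≤ n) :
    (∃ m : ℤ, (2 : ℚ) ^ (2 * n) * (2 * n + 1) / ((n : ℚ) + 1) = (m : ℚ)) ↔
      ∃ ℓ : ℕ, 1 ≤ ℓ ∧ n = 2 ^ ℓ - 1 := by
  have hcast : (2 : ℚ) ^ (2 * n) * (2 * n + 1) / ((n : ℚ) + 1) =
      ((2 ^ (2 * n) * (2 * n + 1) : ℕ) : ℚ) / ((n + 1 : ℕ) : ℚ) := by
    push_cast; rfl
  rw [hcast, Nat.exists_intCast_eq_cast_div_cast_iff_dvd n.succ_ne_zero,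
    (Nat.coprime_succ_two_mul_add_one n).dvd_mul_right, Nat.succ_dvd_two_pow_two_mul_iff]
  constructor
  · rintro ⟨ℓ, h⟩
    refine ⟨ℓ, Nat.one_le_iff_ne_zero.mpr ?_, by omega⟩
    rintro rfl
    omega
  · rintro ⟨ℓ, -, h⟩
    exact ⟨ℓ, by have := Nat.one_le_two_pow (n := ℓ); omega⟩
end

section
/- The integer solutions (x, y) with x, y > 0 of the Pell-type equation x² - 6y² = 9 are exactly the pairs obtained from 3(5+2√6)^ℓ = x + y√6 for ℓ ≥ 0; consequently, the positive integers d for which 6(d+1)(d+2) is a perfect square are exactly d = ((5+2√6)^ℓ + (5-2√6)^ℓ - 6)/4 for integers ℓ ≥ 1. -/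
/-!
Every positive solution of `x² - 6y² = 9` has `3 ∣ x` and `3 ∣ y`, so it is three times a positive
solution of the Pell equation `u² - 6v² = 1`, whose fundamental solution is `5 + 2√6`; hence
`x + y√6 = 3(5 + 2√6)ˡ`. Since `√6` is irrational, the real embedding of `ℤ[√6]` is injective, so
this real identity is equivalent to `(x, y)` being three times the coordinates of `(5 + 2√6)ˡ`.
For the second part, `6(d+1)(d+2) = y²` is `(6d + 9)² - 6y² = 9`, so `2d + 3` is the `x`-coordinate
`((5 + 2√6)ˡ + (5 - 2√6)ˡ) / 2` of a power of the fundamental solution, and `ℓ = 0` would force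
`2d + 3 = 1`.
-/

open Real Pell

lemma Pell.Solution₁.coe_pow {d : ℤ} (a : Solution₁ d) (n : ℕ) :
    ((a ^ n : Solution₁ d) : ℤ√d) = (a : ℤ√d) ^ n :=
  SubmonoidClass.coe_pow (S := unitary (ℤ√d)) a n

def pellSix : Solution₁ 6 := Solution₁.mk 5 2 (by norm_num)

lemma isFundamental_pellSix : IsFundamental pellSix := by
  refine ⟨by decide, by decide, fun {b} hb => ?_⟩
  show (5 : ℤ) ≤ b.x
  by_contra! hlt
  have hprop := b.prop
  interval_cases b.x <;> omega

lemma exists_pow_of_sq_sub_six_mul_sq_eq_one {u v : ℤ} (hu : 0 < u) (hv : 0 ≤ v)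
    (h : u ^ 2 - 6 * v ^ 2 = 1) : ∃ n : ℕ, (pellSix ^ n).x = u ∧ (pellSix ^ n).y = v := by
  obtain ⟨n, hn⟩ := isFundamental_pellSix.eq_pow_of_nonneg
    (a := Solution₁.mk u v h) (by simpa using hu) (by simpa using hv)
  exact ⟨n, by rw [← hn, Solution₁.x_mk], by rw [← hn, Solution₁.y_mk]⟩

lemma three_dvd_of_sq_sub_six_mul_sq_eq_nine {x y : ℤ} (h : x ^ 2 - 6 * y ^ 2 = 9) :
    3 ∣ x ∧ 3 ∣ y := by
  have hx : 3 ∣ x := Int.prime_three.dvd_of_dvd_pow (n := 2) ⟨2 * y ^ 2 + 3, by linarith⟩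
  obtain ⟨u, rfl⟩ := hx
  refine ⟨dvd_mul_right 3 u, Int.prime_three.dvd_of_dvd_pow (n := 2) ?_⟩
  have h2 : (3 : ℤ) ∣ 2 * y ^ 2 := ⟨u ^ 2 - 1, by linarith⟩
  exact (Int.prime_three.dvd_mul.mp h2).resolve_left (by norm_num)

lemma sq_sub_six_mul_sq_eq_nine_iff {x y : ℤ} (hx : 0 < x) (hy : 0 ≤ y) :
    x ^ 2 - 6 * y ^ 2 = 9 ↔ ∃ n : ℕ, x = 3 * (pellSix ^ n).x ∧ y = 3 * (pellSix ^ n).y := by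
  constructor
  · intro h
    obtain ⟨⟨u, rfl⟩, ⟨v, rfl⟩⟩ := three_dvd_of_sq_sub_six_mul_sq_eq_nine h
    obtain ⟨n, hu, hv⟩ := exists_pow_of_sq_sub_six_mul_sq_eq_one (u := u) (v := v)
      (by omega) (by omega) (by linarith)
    exact ⟨n, by rw [hu], by rw [hv]⟩
  · rintro ⟨n, rfl, rfl⟩
    linear_combination 9 * (pellSix ^ n).prop

noncomputable def toRealSix : ℤ√6 →+* ℝ :=
  Zsqrtd.lift ⟨√6, by norm_num⟩

lemma toRealSix_apply (a : ℤ√6) : toRealSix a = a.re + a.im * √6 := rfl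

lemma toRealSix_injective : Function.Injective toRealSix :=
  Zsqrtd.lift_injective _ fun n h => by
    have : n.natAbs ^ 2 = 6 := by zify; rw [sq_abs]; linarith
    have : n.natAbs ≤ 3 := by nlinarith
    interval_cases n.natAbs <;> omega

lemma toRealSix_pellSix_pow (n : ℕ) :
    toRealSix (pellSix ^ n : Solution₁ 6) = (5 + 2 * √6) ^ n := by
  rw [Solution₁.coe_pow, map_pow]
  simp [toRealSix_apply, pellSix, Solution₁.mk]

lemma toRealSix_star_pellSix_pow (n : ℕ) :
    toRealSix (star (pellSix ^ n : Solution₁ 6) : ℤ√6) = (5 - 2 * √6) ^ n := by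
  rw [Solution₁.coe_pow, star_pow, map_pow]
  simp only [pellSix, Solution₁.mk, Zsqrtd.star_mk, toRealSix_apply, Int.cast_ofNat, Int.cast_neg]
  ring

lemma toRealSix_add_toRealSix_star (a : ℤ√6) :
    toRealSix a + toRealSix (star a) = 2 * a.re := by
  simp only [toRealSix_apply, Zsqrtd.re_star, Zsqrtd.im_star, Int.cast_neg]
  ring

lemma pow_add_pow_eq_two_mul_pellSix_pow_x (n : ℕ) :
    (5 + 2 * √6) ^ n + (5 - 2 * √6) ^ n = 2 * (pellSix ^ n).x := by
  rw [← toRealSix_pellSix_pow, ← toRealSix_star_pellSix_pow,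
    toRealSix_add_toRealSix_star]
  rfl

lemma add_mul_sqrt_six_eq_three_mul_pow_iff (x y : ℤ) (n : ℕ) :
    (x : ℝ) + y * √6 = 3 * (5 + 2 * √6) ^ n ↔
      x = 3 * (pellSix ^ n).x ∧ y = 3 * (pellSix ^ n).y := by
  rw [← toRealSix_pellSix_pow, show (x : ℝ) + y * √6 = toRealSix ⟨x, y⟩ from rfl,
    (map_ofNat toRealSix 3).symm, ← map_mul, toRealSix_injective.eq_iff, Zsqrtd.ext_iff]
  simp [Solution₁.x, Solution₁.y]

lemma exists_six_mul_succ_mul_add_two_eq_sq_iff (d : ℕ) :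
    (∃ y : ℕ, 6 * (d + 1) * (d + 2) = y ^ 2) ↔ ∃ n : ℕ, (pellSix ^ n).x = 2 * d + 3 := by
  constructor
  · rintro ⟨y, hy⟩
    have hyZ : 6 * ((d : ℤ) + 1) * (d + 2) = (y : ℤ) ^ 2 := by exact_mod_cast hy
    obtain ⟨n, hx, -⟩ := (sq_sub_six_mul_sq_eq_nine_iff (x := 6 * d + 9) (y := y)
      (by positivity) (by positivity)).mp (by linear_combination 6 * hyZ)
    exact ⟨n, by omega⟩
  · rintro ⟨n, hn⟩
    refine ⟨(3 * (pellSix ^ n).y).natAbs, ?_⟩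
    zify
    rw [sq_abs]
    refine mul_left_cancel₀ (two_ne_zero (α := ℤ)) ?_
    linear_combination 3 * (pellSix ^ n).prop - 3 * ((pellSix ^ n).x + 2 * d + 3) * hn

/-- The positive solutions of `x² - 6y² = 9` come from `3(5+2√6)^ℓ`, and
consequently `6(d+1)(d+2)` is a perfect square exactly when
`d = ((5+2√6)^ℓ + (5-2√6)^ℓ - 6)/4` for some `ℓ ≥ 1`. -/
theorem stmt_16 :
    (∀ x y : ℤ, 0 < x → 0 < y →
      (x ^ 2 - 6 * y ^ 2 = 9 ↔
        ∃ ℓ : ℕ, (x : ℝ) + (y : ℝ) * Real.sqrt 6 = 3 * (5 + 2 * Real.sqrt 6) ^ ℓ)) ∧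
    (∀ d : ℕ, 0 < d →
      ((∃ y : ℕ, 6 * (d + 1) * (d + 2) = y ^ 2) ↔
        ∃ ℓ : ℕ, 1 ≤ ℓ ∧ (d : ℝ) =
          ((5 + 2 * Real.sqrt 6) ^ ℓ + (5 - 2 * Real.sqrt 6) ^ ℓ - 6) / 4)) := by
  refine ⟨fun x y hx hy => ?_, fun d _ => ?_⟩
  · simp only [sq_sub_six_mul_sq_eq_nine_iff hx hy.le, add_mul_sqrt_six_eq_three_mul_pow_iff]
  · simp only [exists_six_mul_succ_mul_add_two_eq_sq_iff, pow_add_pow_eq_two_mul_pellSix_pow_x]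
    refine exists_congr fun n => ⟨fun hn => ⟨?_, ?_⟩, fun ⟨_, hn⟩ => ?_⟩
    · refine Nat.one_le_iff_ne_zero.mpr fun h0 => ?_
      rw [h0, pow_zero, Solution₁.x_one] at hn
      omega
    · rw [hn]; push_cast; ring
    · have : ((pellSix ^ n).x : ℝ) = 2 * d + 3 := by linarith
      exact_mod_cast this
end

section
/- A positive integer d satisfies that 10(d+1)(d+4) is a perfect square if and only if 2d+5 = (u + ū)/2 where u ranges over 3(19+6√10)^{ℓ₁} (ℓ₁ ≥ 1), (7+2√10)(19+6√10)^{ℓ₂} (ℓ₂ ≥ 0), or (7-2√10)(19+6√10)^{ℓ₃} (ℓ₃ ≥ 0); equivalently the solutions of x̃² - 10ỹ² = 9 with x̃ = 2d+5 are exactly the associates of 3, 7+2√10, and 7-2√10 under multiplication by powers of 19+6√10. -/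
/-!
With `x = 2d + 5` and `y` replaced by `y / 5` the condition reads `x² - 10y² = 9`, i.e.
`x + y√10 ∈ ℤ[√10]` has norm `9`. Multiplying by the norm-one unit `19 - 6√10` keeps the norm
and `x > 0` and strictly decreases `|y|` as long as `|y| ≥ 3`, so every solution with `x > 0`
descends to one with `|y| ≤ 2`, namely `3` or `7 ± 2√10`. Conjugation fixes `x`, so negative
powers of `19 + 6√10` can be traded for nonnegative ones; and `x = 3` would mean `d = -1`,
whence `ℓ ≥ 1` in the first family.
-/

namespace Zsqrtd

theorem norm_pow {d : ℤ} (z : ℤ√d) (n : ℕ) : (z ^ n).norm = z.norm ^ n :=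
  map_pow normMonoidHom z n

theorem toReal_add_toReal_star {d : ℤ} (hd : 0 ≤ d) (z : ℤ√d) :
    toReal hd z + toReal hd (star z) = 2 * z.re := by
  simp only [toReal_apply, re_star, im_star]
  push_cast
  ring

end Zsqrtd

open Zsqrtd

/-- `19 + 6√10 = (3 + √10)²` generates the units of norm `1` up to sign. -/
def pellUnit : ℤ√10 := ⟨19, 6⟩

lemma norm_pellUnit : pellUnit.norm = 1 := by
  simp [pellUnit, norm_def]

lemma pellUnit_mul_star : pellUnit * star pellUnit = 1 := by
  ext <;> simp [pellUnit]

def normNineReps : Set (ℤ√10) := {⟨3, 0⟩, ⟨7, 2⟩, ⟨7, -2⟩}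

lemma star_mem_normNineReps {v : ℤ√10} (hv : v ∈ normNineReps) : star v ∈ normNineReps := by
  simp only [normNineReps, Set.mem_insert_iff, Set.mem_singleton_iff] at hv ⊢
  rcases hv with rfl | rfl | rfl <;> simp [star_mk]

lemma mem_normNineReps_of_abs_im_le_two {u : ℤ√10} (hnorm : u.norm = 9) (hre : 0 < u.re)
    (him : |u.im| ≤ 2) : u ∈ normNineReps := by
  obtain ⟨x, y⟩ := u
  simp only [norm_def] at hnorm
  simp only at hre him
  obtain ⟨hy₁, hy₂⟩ := abs_le.mp him
  have hx : x ≤ 7 := by nlinarith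
  simp only [normNineReps, Set.mem_insert_iff, Set.mem_singleton_iff, Zsqrtd.mk.injEq]
  interval_cases y <;> interval_cases x <;> omega

/-- For `x² - 10y² = 9` with `x > 0` and `y ≥ 3` one has `3y < x < 10y/3`, which is exactly
`|19y - 6x| < y`. -/
lemma re_mul_star_pellUnit_pos_and_abs_im_lt {u : ℤ√10} (hnorm : u.norm = 9) (hre : 0 < u.re)
    (him : 3 ≤ u.im) : 0 < (u * star pellUnit).re ∧ |(u * star pellUnit).im| < u.im := by
  obtain ⟨x, y⟩ := u
  simp only [norm_def] at hnorm
  simp only at hre him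
  simp only [pellUnit, star_mk, re_mul, im_mul, abs_lt]
  refine ⟨by nlinarith, by nlinarith, by nlinarith⟩

/-- The alternative `star u = v * pellUnit ^ n` stands for `u = star v * pellUnit ^ (-n)`, as
`star pellUnit = pellUnit⁻¹`. -/
def InRepOrbit (u : ℤ√10) : Prop :=
  ∃ v ∈ normNineReps, ∃ n : ℕ, u = v * pellUnit ^ n ∨ star u = v * pellUnit ^ n

lemma InRepOrbit.of_star {u : ℤ√10} (hu : InRepOrbit (star u)) : InRepOrbit u := by
  obtain ⟨v, hv, n, h⟩ := hu
  exact ⟨v, hv, n, by rwa [star_star, or_comm] at h⟩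

lemma InRepOrbit.of_mul_star_pellUnit {u : ℤ√10} (hu : InRepOrbit (u * star pellUnit)) :
    InRepOrbit u := by
  obtain ⟨v, hv, n, h | h⟩ := hu
  · exact ⟨v, hv, n + 1, Or.inl (by linear_combination pellUnit * h - u * pellUnit_mul_star)⟩
  rw [star_mul, star_star] at h
  cases n with
  | zero =>
    have h' := congrArg star h
    rw [star_mul, star_star, pow_zero, mul_one] at h'
    exact ⟨star v, star_mem_normNineReps hv, 1,
      Or.inl (by linear_combination pellUnit * h' - u * pellUnit_mul_star)⟩
  | succ n =>
    refine ⟨v, hv, n, Or.inr ?_⟩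
    linear_combination star pellUnit * h - (star u - v * pellUnit ^ n) * pellUnit_mul_star

theorem inRepOrbit_of_norm_eq_nine {u : ℤ√10} (hnorm : u.norm = 9) (hre : 0 < u.re) :
    InRepOrbit u := by
  induction hk : u.im.natAbs using Nat.strong_induction_on generalizing u with
  | _ k ih =>
  have of_im_pos {w : ℤ√10} (hnorm : w.norm = 9) (hre : 0 < w.re) (him : 2 < w.im)
      (hwk : w.im.natAbs = k) : InRepOrbit w := by
    obtain ⟨hre', him'⟩ := re_mul_star_pellUnit_pos_and_abs_im_lt hnorm hre him
    have hnorm' : (w * star pellUnit).norm = 9 := by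
      rw [norm_mul, norm_conj, norm_pellUnit, hnorm, mul_one]
    have hlt := abs_lt.mp him'
    exact InRepOrbit.of_mul_star_pellUnit (ih _ (by omega) hnorm' hre' rfl)
  rcases le_or_gt |u.im| 2 with hsmall | hlarge
  · exact ⟨u, mem_normNineReps_of_abs_im_le_two hnorm hre hsmall, 0, by simp⟩
  rcases lt_abs.mp hlarge with hpos | hneg
  · exact of_im_pos hnorm hre hpos hk
  · exact InRepOrbit.of_star <| of_im_pos (by rwa [norm_conj]) (by rwa [re_star])
      (by rw [im_star]; omega) (by rw [im_star, Int.natAbs_neg, hk])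

theorem exists_norm_eq_nine_re_eq_iff {x : ℤ} (hx : 3 < x) :
    (∃ u : ℤ√10, u.norm = 9 ∧ u.re = x) ↔
      (∃ n : ℕ, 1 ≤ n ∧ x = (⟨3, 0⟩ * pellUnit ^ n : ℤ√10).re) ∨
      (∃ n : ℕ, x = (⟨7, 2⟩ * pellUnit ^ n : ℤ√10).re) ∨
      (∃ n : ℕ, x = (⟨7, -2⟩ * pellUnit ^ n : ℤ√10).re) := by
  constructor
  · rintro ⟨u, hnorm, rfl⟩
    obtain ⟨v, hv, n, h⟩ := inRepOrbit_of_norm_eq_nine hnorm (by omega)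
    have hre : u.re = (v * pellUnit ^ n).re := by
      rcases h with h | h
      · rw [h]
      · rw [← re_star, h]
    simp only [normNineReps, Set.mem_insert_iff, Set.mem_singleton_iff] at hv
    rcases hv with rfl | rfl | rfl
    · refine Or.inl ⟨n, Nat.one_le_iff_ne_zero.mpr ?_, hre⟩
      rintro rfl
      simp only [pow_zero, mul_one] at hre
      omega
    · exact Or.inr (Or.inl ⟨n, hre⟩)
    · exact Or.inr (Or.inr ⟨n, hre⟩)
  · rintro (⟨n, -, h⟩ | ⟨n, h⟩ | ⟨n, h⟩) <;>
      exact ⟨_, by rw [norm_mul, norm_pow, norm_pellUnit, one_pow, mul_one]; rfl, h.symm⟩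

theorem exists_sq_iff_exists_norm_eq_nine (d : ℕ) :
    (∃ y : ℕ, 10 * (d + 1) * (d + 4) = y ^ 2) ↔
      ∃ u : ℤ√10, u.norm = 9 ∧ u.re = 2 * d + 5 := by
  constructor
  · rintro ⟨y, hy⟩
    obtain ⟨w, rfl⟩ : 5 ∣ y :=
      Nat.prime_five.dvd_of_dvd_pow ⟨2 * (d + 1) * (d + 4), by rw [← hy]; ring⟩
    refine ⟨⟨2 * d + 5, w⟩, ?_, rfl⟩
    have hy' : (10 * (d + 1) * (d + 4) : ℤ) = (5 * w) ^ 2 := by exact_mod_cast hy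
    rw [norm_def]
    linarith
  · rintro ⟨u, hnorm, hre⟩
    refine ⟨5 * u.im.natAbs, ?_⟩
    rw [norm_def, hre] at hnorm
    zify
    rw [mul_pow, sq_abs]
    linarith

lemma re_mk_mul_pellUnit_pow (a b : ℤ) (n : ℕ) :
    (((⟨a, b⟩ * pellUnit ^ n : ℤ√10).re : ℤ) : ℝ) =
      ((a + b * √10) * (19 + 6 * √10) ^ n + (a - b * √10) * (19 - 6 * √10) ^ n) / 2 := by
  rw [eq_div_iff two_ne_zero, mul_comm, ← toReal_add_toReal_star (by norm_num)]
  simp only [map_mul, map_pow, star_mul, star_pow, star_mk, toReal_apply, pellUnit]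
  push_cast
  ring

theorem stmt_17_general (d : ℕ) :
    (∃ y : ℕ, 10 * (d + 1) * (d + 4) = y ^ 2) ↔
      ((∃ ℓ : ℕ, 1 ≤ ℓ ∧ (2 * (d : ℝ) + 5) =
          (3 * (19 + 6 * Real.sqrt 10) ^ ℓ + 3 * (19 - 6 * Real.sqrt 10) ^ ℓ) / 2) ∨
       (∃ ℓ : ℕ, (2 * (d : ℝ) + 5) =
          ((7 + 2 * Real.sqrt 10) * (19 + 6 * Real.sqrt 10) ^ ℓ +
           (7 - 2 * Real.sqrt 10) * (19 - 6 * Real.sqrt 10) ^ ℓ) / 2) ∨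
       (∃ ℓ : ℕ, (2 * (d : ℝ) + 5) =
          ((7 - 2 * Real.sqrt 10) * (19 + 6 * Real.sqrt 10) ^ ℓ +
           (7 + 2 * Real.sqrt 10) * (19 - 6 * Real.sqrt 10) ^ ℓ) / 2)) := by
  have hx : 2 * (d : ℝ) + 5 = ((2 * d + 5 : ℤ) : ℝ) := by push_cast; ring
  have re_three (n : ℕ) : (3 * (19 + 6 * √10) ^ n + 3 * (19 - 6 * √10) ^ n) / 2 =
      (((⟨3, 0⟩ * pellUnit ^ n : ℤ√10).re : ℤ) : ℝ) := by
    rw [re_mk_mul_pellUnit_pow]; push_cast; ring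
  have re_seven_add (n : ℕ) :
      ((7 + 2 * √10) * (19 + 6 * √10) ^ n + (7 - 2 * √10) * (19 - 6 * √10) ^ n) / 2 =
        (((⟨7, 2⟩ * pellUnit ^ n : ℤ√10).re : ℤ) : ℝ) := by
    rw [re_mk_mul_pellUnit_pow]; push_cast; ring
  have re_seven_sub (n : ℕ) :
      ((7 - 2 * √10) * (19 + 6 * √10) ^ n + (7 + 2 * √10) * (19 - 6 * √10) ^ n) / 2 =
        (((⟨7, -2⟩ * pellUnit ^ n : ℤ√10).re : ℤ) : ℝ) := by
    rw [re_mk_mul_pellUnit_pow]; push_cast; ring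
  simp only [hx, re_three, re_seven_add, re_seven_sub, Int.cast_inj]
  rw [exists_sq_iff_exists_norm_eq_nine, exists_norm_eq_nine_re_eq_iff (by omega)]

/-- `10(d+1)(d+4)` is a perfect square iff `2d+5 = (u + ū)/2` where `u` is
`3(19+6√10)^{ℓ₁}` (`ℓ₁ ≥ 1`), `(7+2√10)(19+6√10)^{ℓ₂}` (`ℓ₂ ≥ 0`), or
`(7-2√10)(19+6√10)^{ℓ₃}` (`ℓ₃ ≥ 0`). -/
theorem stmt_17 (d : ℕ) (hd : 0 < d) :
    (∃ y : ℕ, 10 * (d + 1) * (d + 4) = y ^ 2) ↔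
      ((∃ ℓ : ℕ, 1 ≤ ℓ ∧ (2 * (d : ℝ) + 5) =
          (3 * (19 + 6 * Real.sqrt 10) ^ ℓ + 3 * (19 - 6 * Real.sqrt 10) ^ ℓ) / 2) ∨
       (∃ ℓ : ℕ, (2 * (d : ℝ) + 5) =
          ((7 + 2 * Real.sqrt 10) * (19 + 6 * Real.sqrt 10) ^ ℓ +
           (7 - 2 * Real.sqrt 10) * (19 - 6 * Real.sqrt 10) ^ ℓ) / 2) ∨
       (∃ ℓ : ℕ, (2 * (d : ℝ) + 5) =
          ((7 - 2 * Real.sqrt 10) * (19 + 6 * Real.sqrt 10) ^ ℓ +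
           (7 + 2 * Real.sqrt 10) * (19 - 6 * Real.sqrt 10) ^ ℓ) / 2)) :=
  stmt_17_general d
end

section
/- Let n = 2^ℓ - 1 with ℓ ≥ 2, and for 1 ≤ r ≤ n define u_r = 2^r · C(n,r) · (n+2)(n+3)···(n+r+1) / (1·3···(2r-1)), assumed to be integers. Then the 2-adic valuations satisfy ord₂(u₁) = 1, ord₂(u₂) = 3, ord₂(u₃) = 4, and ord₂(u_r) ≥ r + ⌊r/2⌋ for all r ≥ 1; consequently the Newton polygon of X^n + Σ_{r=1}^n (-1)^r u_r X^{n-r} at the prime 2 has an edge of slope 3/2, so this polynomial has no factorization into linear polynomials over ℤ (it has a non-integer root). -/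
/-!
Since `n + 1 = 2 ^ ℓ`, for `1 ≤ j ≤ r ≤ n` the numbers `n + 1 + j` and `n + 1 - j` have the same
`2`-adic valuation as `j`. Hence `C(n, r)` is odd, `(n + 2)⋯(n + r + 1)` has the valuation of `r!`,
and the denominator is odd, so `ord₂ u_r = r + ord₂ r! ≥ r + ⌊r/2⌋`.

If the polynomial were `∏ (X - x_i)` with `x_i ∈ ℤ`, Vieta would give `u_r = e_r(x)`. All `u_r`
are even, so all roots are even, `x_i = 2 y_i` and `u_r = 2^r e_r(y)`. Let `T` be the set of odd
`y_i`. If `T = ∅` then `4 ∣ u_1`; if `#T = 1` then every product of three `y_i` has two even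
factors and `2^5 ∣ u_3`; if `#T = m ≥ 2` then `e_m(y) ≡ ∏_{i ∈ T} y_i` is odd, so `ord₂ u_m = m`,
whereas `ord₂ u_m ≥ m + ⌊m/2⌋ > m`.
-/

open Finset Polynomial
open scoped Nat

section PadicValuation

variable {p : ℕ} [hp : Fact p.Prime]

theorem padicValNat_finset_prod {ι : Type*} (s : Finset ι) {f : ι → ℕ}
    (hf : ∀ i ∈ s, f i ≠ 0) :
    padicValNat p (∏ i ∈ s, f i) = ∑ i ∈ s, padicValNat p (f i) := by
  simp_rw [← Nat.factorization_def _ hp.out]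
  rw [Nat.factorization_prod hf, Finsupp.finsetSum_apply]

theorem padicValInt_pow_add {ℓ : ℕ} {k : ℤ} (hk : k ≠ 0) (hkℓ : k.natAbs < p ^ ℓ) :
    padicValInt p ((p : ℤ) ^ ℓ + k) = padicValInt p k := by
  have hvk : padicValInt p k < ℓ := by
    have hle : p ^ padicValInt p k ≤ k.natAbs :=
      Nat.le_of_dvd (Int.natAbs_pos.mpr hk) (Int.natCast_dvd.mp (padicValInt_dvd k))
    exact (Nat.pow_lt_pow_iff_right hp.out.one_lt).mp (hle.trans_lt hkℓ)
  have hsum : (p : ℤ) ^ ℓ + k ≠ 0 := by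
    intro h
    have : k.natAbs = p ^ ℓ := by rw [eq_neg_of_add_eq_zero_right h]; simp
    omega
  have hp0 : (p : ℚ) ≠ 0 := Nat.cast_ne_zero.mpr hp.out.ne_zero
  have h := padicValRat.add_eq_of_lt (p := p) (q := (k : ℚ)) (r := (p : ℚ) ^ ℓ)
    (by exact_mod_cast add_comm k _ ▸ hsum) (Int.cast_ne_zero.mpr hk) (pow_ne_zero _ hp0)
    (by rw [padicValRat.of_int, padicValRat.pow, padicValRat.self hp.out.one_lt]
        simpa using hvk)
  rw [← Int.cast_natCast, ← Int.cast_pow, ← Int.cast_add, padicValRat.of_int,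
    padicValRat.of_int, add_comm] at h
  exact_mod_cast h

theorem padicValNat_pow_add {ℓ k : ℕ} (hk : k ≠ 0) (hkℓ : k < p ^ ℓ) :
    padicValNat p (p ^ ℓ + k) = padicValNat p k := by
  have h := padicValInt_pow_add (p := p) (ℓ := ℓ) (Int.natCast_ne_zero.mpr hk) hkℓ
  exact_mod_cast h

theorem padicValNat_pow_sub {ℓ k : ℕ} (hk : k ≠ 0) (hkℓ : k < p ^ ℓ) :
    padicValNat p (p ^ ℓ - k) = padicValNat p k := by
  have h := padicValInt_pow_add (p := p) (ℓ := ℓ) (k := -k) (by omega) (by simpa using hkℓ)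
  rwa [← sub_eq_add_neg, padicValInt, padicValInt, Int.natAbs_neg, ← Nat.cast_pow,
    ← Nat.cast_sub hkℓ.le, Int.natAbs_natCast, Int.natAbs_natCast] at h

theorem padicValNat_factorial_eq_sum (r : ℕ) :
    padicValNat p r ! = ∑ j ∈ range r, padicValNat p (j + 1) := by
  rw [← prod_range_add_one_eq_factorial, padicValNat_finset_prod _ fun j _ => j.succ_ne_zero]

theorem padicValNat_prod_range_add {ℓ n r : ℕ} (hn : n + 1 = p ^ ℓ) (hr : r ≤ n) :
    padicValNat p (∏ j ∈ range r, (n + 2 + j)) = padicValNat p r ! := by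
  rw [padicValNat_finset_prod _ fun j _ => by omega, padicValNat_factorial_eq_sum]
  refine sum_congr rfl fun j hj => ?_
  have hj := mem_range.mp hj
  rw [show n + 2 + j = p ^ ℓ + (j + 1) by omega, padicValNat_pow_add j.succ_ne_zero (by omega)]

theorem padicValNat_choose_eq_zero {ℓ n r : ℕ} (hn : n + 1 = p ^ ℓ) (hr : r ≤ n) :
    padicValNat p (n.choose r) = 0 := by
  have hdesc : padicValNat p (n.descFactorial r) = padicValNat p r ! := by
    rw [Nat.descFactorial_eq_prod_range, padicValNat_finset_prod _ fun i hi => by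
      have := mem_range.mp hi; omega, padicValNat_factorial_eq_sum]
    refine sum_congr rfl fun i hi => ?_
    have hi := mem_range.mp hi
    rw [show n - i = p ^ ℓ - (i + 1) by omega, padicValNat_pow_sub i.succ_ne_zero (by omega)]
  rw [Nat.descFactorial_eq_factorial_mul_choose,
    padicValNat.mul (Nat.factorial_ne_zero r) (Nat.choose_pos hr).ne'] at hdesc
  omega

theorem div_le_padicValNat_factorial (r : ℕ) : r / p ≤ padicValNat p r ! := by
  rw [padicValNat_factorial (Nat.lt_succ_of_le (Nat.log_le_self p r))]
  rcases Nat.eq_zero_or_pos r with rfl | hr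
  · simp
  simpa using single_le_sum (f := fun i => r / p ^ i) (fun i _ => Nat.zero_le _)
    (mem_Ico.mpr ⟨le_rfl, Nat.succ_lt_succ hr⟩)

end PadicValuation

theorem Nat.odd_doubleFactorial_two_mul_sub_one (r : ℕ) : Odd (2 * r - 1)‼ := by
  induction r with
  | zero => decide
  | succ r ih =>
    rcases Nat.eq_zero_or_pos r with rfl | hr
    · decide
    rw [show 2 * (r + 1) - 1 = 2 * r - 1 + 2 by omega, Nat.doubleFactorial_add_two]
    exact (Nat.odd_iff.mpr (by omega)).mul ih

theorem padicValInt_two_eq_add_padicValNat_factorial {ℓ n r : ℕ} {u : ℤ} (hn : n + 1 = 2 ^ ℓ)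
    (hr : r ≤ n)
    (hu : (u : ℚ) = 2 ^ r * (n.choose r : ℚ) * (∏ j ∈ range r, ((n : ℚ) + 2 + j)) /
      ((2 * r - 1)‼ : ℚ)) :
    u ≠ 0 ∧ padicValInt 2 u = r + padicValNat 2 r ! := by
  have hP : ∏ j ∈ range r, (n + 2 + j) ≠ 0 := prod_ne_zero_iff.mpr fun j _ => by omega
  have hC : n.choose r ≠ 0 := (Nat.choose_pos hr).ne'
  have h2C : 2 ^ r * n.choose r ≠ 0 := mul_ne_zero (pow_ne_zero _ two_ne_zero) hC
  have hN : 2 ^ r * n.choose r * ∏ j ∈ range r, (n + 2 + j) ≠ 0 := mul_ne_zero h2C hP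
  have hD : (2 * r - 1)‼ ≠ 0 := (Nat.doubleFactorial_pos _).ne'
  have hcross :
      u * (2 * r - 1)‼ = ((2 ^ r * n.choose r * ∏ j ∈ range r, (n + 2 + j) : ℕ) : ℤ) := by
    have hDq : ((2 * r - 1)‼ : ℚ) ≠ 0 := by exact_mod_cast hD
    rw [← Int.cast_inj (α := ℚ)]
    push_cast
    rw [hu, div_mul_cancel₀ _ hDq]
  have hu0 : u ≠ 0 := by
    rintro rfl
    exact hN (by exact_mod_cast hcross.symm.trans (zero_mul _))
  refine ⟨hu0, ?_⟩
  have hv := congrArg (padicValInt 2) hcross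
  rw [padicValInt.mul hu0 (by exact_mod_cast hD), padicValInt.of_nat, padicValInt.of_nat,
    padicValNat.eq_zero_of_not_dvd (Nat.odd_doubleFactorial_two_mul_sub_one r).not_two_dvd_nat,
    padicValNat.mul h2C hP, padicValNat.mul (pow_ne_zero _ two_ne_zero) hC,
    padicValNat.prime_pow, padicValNat_choose_eq_zero hn hr, padicValNat_prod_range_add hn hr,
    add_zero] at hv
  exact hv

section ElementarySymmetric

variable {R ι : Type*} [CommRing R]

theorem esymm_const_mul (s : Finset ι) (y : ι → R) (c : R) (k : ℕ) :
    ∑ t ∈ s.powersetCard k, ∏ i ∈ t, c * y i = c ^ k * ∑ t ∈ s.powersetCard k, ∏ i ∈ t, y i := by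
  rw [mul_sum]
  refine sum_congr rfl fun t ht => ?_
  rw [prod_mul_distrib, prod_const, (mem_powersetCard.mp ht).2]

variable [DecidableEq ι]

theorem pow_card_sdiff_dvd_prod {t T : Finset ι} {y : ι → R} {d : R}
    (h : ∀ i ∈ t \ T, d ∣ y i) : d ^ #(t \ T) ∣ ∏ i ∈ t, y i := by
  rw [← prod_inter_mul_prod_sdiff t T, ← prod_const]
  exact dvd_mul_of_dvd_right (prod_dvd_prod_of_dvd _ _ h) _

theorem pow_sub_card_dvd_esymm {s T : Finset ι} {y : ι → R} {d : R}
    (h : ∀ i ∈ s, i ∉ T → d ∣ y i) (k : ℕ) :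
    d ^ (k - #T) ∣ ∑ t ∈ s.powersetCard k, ∏ i ∈ t, y i := by
  refine dvd_sum fun t ht => ?_
  obtain ⟨hts, htk⟩ := mem_powersetCard.mp ht
  refine (pow_dvd_pow d ?_).trans (pow_card_sdiff_dvd_prod (T := T) fun i hi => ?_)
  · simpa [htk] using le_card_sdiff T t
  · obtain ⟨hit, hiT⟩ := mem_sdiff.mp hi
    exact h i (hts hit) hiT

theorem not_dvd_esymm_card {s T : Finset ι} {y : ι → R} {p : R} (hp : Prime p) (hTs : T ⊆ s)
    (hT : ∀ i ∈ T, ¬ p ∣ y i) (hsT : ∀ i ∈ s, i ∉ T → p ∣ y i) :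
    ¬ p ∣ ∑ t ∈ s.powersetCard #T, ∏ i ∈ t, y i := by
  have hTmem : T ∈ s.powersetCard #T := mem_powersetCard.mpr ⟨hTs, rfl⟩
  rw [← add_sum_erase _ _ hTmem, dvd_add_left]
  · rw [hp.dvd_finsetProd_iff]
    rintro ⟨i, hi, hpi⟩
    exact hT i hi hpi
  refine dvd_sum fun t ht => ?_
  obtain ⟨htT, ht⟩ := mem_erase.mp ht
  obtain ⟨hts, htk⟩ := mem_powersetCard.mp ht
  have hcard : #(t \ T) ≠ 0 := by
    rw [Ne, card_eq_zero, sdiff_eq_empty_iff_subset]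
    exact fun hsub => htT (eq_of_subset_of_card_le hsub htk.ge)
  refine (dvd_pow_self p hcard).trans (pow_card_sdiff_dvd_prod fun i hi => ?_)
  obtain ⟨hit, hiT⟩ := mem_sdiff.mp hi
  exact hsT i (hts hit) hiT

end ElementarySymmetric

section LinearFactors

variable {R : Type*} [CommRing R] {n : ℕ} {u : ℕ → R} {x : Fin n → R}

theorem eq_esymm_of_eq_prod_X_sub_C
    (hx : (X ^ n + ∑ r ∈ Icc 1 n, C ((-1) ^ r * u r) * X ^ (n - r) : R[X]) =
      ∏ i, (X - C (x i))) {r : ℕ} (hr1 : 1 ≤ r) (hrn : r ≤ n) :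
    u r = ∑ t ∈ univ.powersetCard r, ∏ i ∈ t, x i := by
  have hprod : ∏ i, (X - C (x i)) = ∏ i, (X + C (-1 * x i)) := by
    simp [sub_eq_add_neg]
  have hcoeff := congrArg (coeff · (n - r)) (hx.trans hprod)
  rw [coeff_add, coeff_X_pow, if_neg (by omega), finsetSum_coeff,
    sum_eq_single_of_mem r (mem_Icc.mpr ⟨hr1, hrn⟩) fun s hs hsr => by
      rw [coeff_C_mul_X_pow, if_neg (by have := mem_Icc.mp hs; omega)],
    coeff_C_mul_X_pow, if_pos rfl, zero_add, prod_X_add_C_coeff _ _ (by simp),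
    card_univ, Fintype.card_fin, Nat.sub_sub_self hrn, esymm_const_mul] at hcoeff
  have h := congrArg ((-1) ^ r * ·) hcoeff
  simpa only [← mul_assoc, ← mul_pow, neg_one_mul, neg_neg, one_pow, one_mul] using h

theorem dvd_of_eq_prod_X_sub_C {p : R} (hp : Prime p)
    (hx : (X ^ n + ∑ r ∈ Icc 1 n, C ((-1) ^ r * u r) * X ^ (n - r) : R[X]) =
      ∏ i, (X - C (x i))) (hu : ∀ r ∈ Icc 1 n, p ∣ u r) (i : Fin n) : p ∣ x i := by
  have hev := congrArg (eval (x i)) hx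
  rw [eval_prod, prod_eq_zero (mem_univ i) (by simp)] at hev
  simp only [eval_add, eval_pow, eval_X, eval_finsetSum, eval_mul, eval_C] at hev
  refine hp.dvd_of_dvd_pow (n := n) ?_
  rw [eq_neg_of_add_eq_zero_left hev, dvd_neg]
  exact dvd_sum fun r hr => ((hu r hr).mul_left _).mul_right _

theorem not_exists_eq_prod_X_sub_C [IsDomain R] {p : R} (hp : Prime p) (hn : 3 ≤ n)
    (h1 : p ∣ u 1) (h1' : ¬ p ^ 2 ∣ u 1) (h3 : ¬ p ^ 5 ∣ u 3)
    (hr : ∀ r, 2 ≤ r → r ≤ n → p ^ (r + 1) ∣ u r) :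
    ¬ ∃ x : Fin n → R,
      (X ^ n + ∑ r ∈ Icc 1 n, C ((-1) ^ r * u r) * X ^ (n - r) : R[X]) =
        ∏ i, (X - C (x i)) := by
  classical
  rintro ⟨x, hx⟩
  have hpu : ∀ r ∈ Icc 1 n, p ∣ u r := fun r hr' => by
    obtain ⟨hr1, hrn⟩ := mem_Icc.mp hr'
    obtain rfl | hr2 := eq_or_lt_of_le hr1
    · exact h1
    · exact (dvd_pow_self p r.succ_ne_zero).trans (hr r hr2 hrn)
  choose y hy using dvd_of_eq_prod_X_sub_C hp hx hpu
  have hu : ∀ r, 1 ≤ r → r ≤ n → u r = p ^ r * ∑ t ∈ univ.powersetCard r, ∏ i ∈ t, y i :=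
    fun r hr1 hrn => by rw [eq_esymm_of_eq_prod_X_sub_C hx hr1 hrn, ← esymm_const_mul]; simp [hy]
  set T := univ.filter fun i => ¬ p ∣ y i
  have hT : ∀ i ∈ T, ¬ p ∣ y i := fun i hi => (mem_filter.mp hi).2
  have hnotT : ∀ i ∈ univ, i ∉ T → p ∣ y i := fun i _ hi => by simpa [T] using hi
  obtain hm | hm | hm : #T = 0 ∨ #T = 1 ∨ 2 ≤ #T := by omega
  · apply h1'
    rw [hu 1 le_rfl (by omega), pow_two, pow_one]
    simpa [hm] using mul_dvd_mul_left p (pow_sub_card_dvd_esymm hnotT 1)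
  · apply h3
    rw [hu 3 (by omega) hn, show 5 = 3 + (3 - #T) by omega, pow_add]
    exact mul_dvd_mul_left _ (pow_sub_card_dvd_esymm hnotT 3)
  · have hTn : #T ≤ n := (card_le_univ T).trans (Fintype.card_fin n).le
    have h := hr #T hm hTn
    rw [hu #T (by omega) hTn, pow_succ, mul_dvd_mul_iff_left (pow_ne_zero _ hp.ne_zero)] at h
    exact not_dvd_esymm_card hp (subset_univ T) hT hnotT h

end LinearFactors

/-- For `n = 2^ℓ - 1` (`ℓ ≥ 2`) and the integer coefficients
`u_r = 2^r C(n,r)(n+2)(n+3)⋯(n+r+1)/(1·3⋯(2r-1))`, one has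
`ord₂(u₁) = 1`, `ord₂(u₂) = 3`, `ord₂(u₃) = 4`, and `ord₂(u_r) ≥ r + ⌊r/2⌋`;
consequently `X^n + ∑_{r=1}^n (-1)^r u_r X^{n-r}` does not factor into linear
polynomials over `ℤ`. -/
theorem stmt_19 (ℓ n : ℕ) (hℓ : 2 ≤ ℓ) (hn : n = 2 ^ ℓ - 1)
    (u : ℕ → ℤ)
    (hu : ∀ r : ℕ, 1 ≤ r → r ≤ n →
      (u r : ℚ) = 2 ^ r * (n.choose r : ℚ) *
        (∏ j ∈ Finset.range r, ((n : ℚ) + 2 + j)) /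
        (Nat.doubleFactorial (2 * r - 1) : ℚ)) :
    padicValInt 2 (u 1) = 1 ∧ padicValInt 2 (u 2) = 3 ∧ padicValInt 2 (u 3) = 4 ∧
    (∀ r : ℕ, 1 ≤ r → r ≤ n → (r + r / 2 : ℕ) ≤ padicValInt 2 (u r)) ∧
    ¬ ∃ x : Fin n → ℤ,
      (X ^ n + ∑ r ∈ Finset.Icc 1 n, C ((-1) ^ r * u r) * X ^ (n - r) : Polynomial ℤ) =
        ∏ i : Fin n, (X - C (x i)) := by
  have hn1 : n + 1 = 2 ^ ℓ := by have := Nat.one_le_two_pow (n := ℓ); omega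
  have hn3 : 3 ≤ n := by have := Nat.pow_le_pow_right two_pos hℓ; omega
  have hval (r : ℕ) (hr1 : 1 ≤ r) (hrn : r ≤ n) :=
    padicValInt_two_eq_add_padicValNat_factorial hn1 hrn (hu r hr1 hrn)
  have hdvd (r : ℕ) (hr1 : 1 ≤ r) (hrn : r ≤ n) (m : ℕ) :
      (2 : ℤ) ^ m ∣ u r ↔ m ≤ padicValInt 2 (u r) := by
    simpa [(hval r hr1 hrn).1] using padicValInt_dvd_iff (p := 2) m (u r)
  have hlower (r : ℕ) (hr1 : 1 ≤ r) (hrn : r ≤ n) : r + r / 2 ≤ padicValInt 2 (u r) := by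
    rw [(hval r hr1 hrn).2]
    exact Nat.add_le_add_left (div_le_padicValNat_factorial r) r
  have h1 : padicValInt 2 (u 1) = 1 := by simp [(hval 1 le_rfl (by omega)).2]
  have h2 : padicValInt 2 (u 2) = 3 := by simp [(hval 2 (by omega) (by omega)).2, Nat.factorial]
  have h3 : padicValInt 2 (u 3) = 4 := by
    rw [(hval 3 (by omega) hn3).2, show 3 ! = 2 * 3 from rfl,
      padicValNat.mul two_ne_zero three_ne_zero,
      padicValNat.eq_zero_of_not_dvd (show ¬ 2 ∣ 3 by decide)]
    simp
  refine ⟨h1, h2, h3, hlower, not_exists_eq_prod_X_sub_C Int.prime_two hn3 ?_ ?_ ?_ ?_⟩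
  · exact (hdvd 1 le_rfl (by omega) 1).mpr (by omega)
  · exact fun h => by have := (hdvd 1 le_rfl (by omega) 2).mp h; omega
  · exact fun h => by have := (hdvd 3 (by omega) hn3 5).mp h; omega
  · exact fun r hr2 hrn =>
      (hdvd r (by omega) hrn _).mpr (by have := hlower r (by omega) hrn; omega)
end
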